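/- arXiv:2506.04692 — 8 statements merged into one kernel-verified Lean document; each statement's English description precedes it below -/
import Mathlib

section
/- For any binary relation R on a set I and ultrafilters u, v on I, the following are equivalent: (1) for all A ∈ u and all B ∈ v there exist a ∈ A and b ∈ B with R a b; (2) for all A ∈ u there exists B ∈ v such that for all b ∈ B there exists a ∈ A with R a b. -/
open Filter

theorem stmt_0 {I : Type*} (R : I → I → Prop) (u v : Ultrafilter I) :
    (∀ A ∈ u, ∀ B ∈ v, ∃ a ∈ A, ∃ b ∈ B, R a b) ↔
    (∀ A ∈ u, ∃ B ∈ v, ∀ b ∈ B, ∃ a ∈ A, R a b) := by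
  refine forall₂_congr fun A _ => ?_
  calc (∀ B ∈ v, ∃ a ∈ A, ∃ b ∈ B, R a b) ↔ ∃ᶠ b in (v : Filter I), ∃ a ∈ A, R a b := by
        simp only [frequently_iff]
        exact forall₂_congr fun B _ => ⟨fun ⟨a, ha, b, hb, h⟩ => ⟨b, hb, a, ha, h⟩,
          fun ⟨b, hb, a, ha, h⟩ => ⟨a, ha, b, hb, h⟩⟩
    _ ↔ ∀ᶠ b in (v : Filter I), ∃ a ∈ A, R a b := Ultrafilter.frequently_iff_eventually
    _ ↔ ∃ B ∈ v, ∀ b ∈ B, ∃ a ∈ A, R a b := eventually_iff_exists_mem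
end

section
/- If R is a transitive binary relation on a set I, then its weak canonical extension R̃ is transitive: for all ultrafilters u, v, w on I, if R̃(u,v) and R̃(v,w) then R̃(u,w). -/
/-
Since `v` is an ultrafilter, `R̃(u, v)` says that for every `A ∈ u` the set of `R`-successors of
points of `A` belongs to `v`: otherwise its complement would be a set of `v` that no point of `A`
reaches. Given `A ∈ u` and `B ∈ w`, apply `R̃(v, w)` to that set of successors and to `B`, and
compose the two `R`-steps by transitivity.
-/

theorem Ultrafilter.setOf_exists_rel_mem {I : Type*} {R : I → I → Prop} {v : Ultrafilter I}
    {A : Set I} (h : ∀ B ∈ v, ∃ a ∈ A, ∃ b ∈ B, R a b) : {b | ∃ a ∈ A, R a b} ∈ v := by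
  refine Ultrafilter.compl_notMem_iff.mp fun hcompl => ?_
  obtain ⟨a, ha, b, hb, hab⟩ := h _ hcompl
  exact hb ⟨a, ha, hab⟩

theorem stmt_4 {I : Type*} (R : I → I → Prop) (hR : Transitive R) (u v w : Ultrafilter I)
    (huv : ∀ A ∈ u, ∀ B ∈ v, ∃ a ∈ A, ∃ b ∈ B, R a b)
    (hvw : ∀ A ∈ v, ∀ B ∈ w, ∃ a ∈ A, ∃ b ∈ B, R a b) :
    ∀ A ∈ u, ∀ B ∈ w, ∃ a ∈ A, ∃ b ∈ B, R a b := by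
  intro A hA B hB
  have hsucc : {c | ∃ a ∈ A, R a c} ∈ v := Ultrafilter.setOf_exists_rel_mem (huv A hA)
  obtain ⟨c, ⟨a, ha, hac⟩, b, hb, hcb⟩ := hvw _ hsucc B hB
  exact ⟨a, ha, b, hb, hR hac hcb⟩
end

section
/- If R is an equivalence relation on a set I, then its weak canonical extension R̃ is an equivalence relation on the set of ultrafilters on I. -/
namespace Ultrafilter

variable {I : Type*} {R : I → I → Prop} {u v w : Ultrafilter I}

def WeakExtension (R : I → I → Prop) (u v : Ultrafilter I) : Prop :=
  ∀ A ∈ u, ∀ B ∈ v, ∃ a ∈ A, ∃ b ∈ B, R a b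

theorem weakExtension_refl (hR : ∀ x, R x x) (u : Ultrafilter I) : WeakExtension R u u := by
  intro A hA B hB
  obtain ⟨x, hxA, hxB⟩ := nonempty_of_mem (Filter.inter_mem hA hB)
  exact ⟨x, hxA, x, hxB, hR x⟩

theorem WeakExtension.symm (hR : ∀ {x y}, R x y → R y x) (h : WeakExtension R u v) :
    WeakExtension R v u := by
  intro B hB A hA
  obtain ⟨a, ha, b, hb, hab⟩ := h A hA B hB
  exact ⟨b, hb, a, ha, hR hab⟩

/-- If the image of `A` missed `v`, its complement would lie in `v` and contain no `R`-successor
of a point of `A`. -/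
theorem WeakExtension.image_mem (h : WeakExtension R u v) {A : Set I} (hA : A ∈ u) :
    {x | ∃ a ∈ A, R a x} ∈ v := by
  by_contra hnot
  obtain ⟨a, ha, x, hx, hax⟩ := h A hA _ (compl_mem_iff_notMem.mpr hnot)
  exact hx ⟨a, ha, hax⟩

theorem WeakExtension.trans (hR : ∀ {x y z}, R x y → R y z → R x z)
    (huv : WeakExtension R u v) (hvw : WeakExtension R v w) : WeakExtension R u w := by
  intro A hA C hC
  obtain ⟨b, ⟨a, ha, hab⟩, c, hc, hbc⟩ := hvw _ (huv.image_mem hA) C hC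
  exact ⟨a, ha, c, hc, hR hab hbc⟩

end Ultrafilter

theorem stmt_5 {I : Type*} (R : I → I → Prop) (hR : Equivalence R) :
    Equivalence (fun u v : Ultrafilter I =>
      ∀ A ∈ u, ∀ B ∈ v, ∃ a ∈ A, ∃ b ∈ B, R a b) :=
  ⟨Ultrafilter.weakExtension_refl hR.refl, Ultrafilter.WeakExtension.symm hR.symm,
    Ultrafilter.WeakExtension.trans hR.trans⟩
end

section
/- If R is a connected (total) binary relation on a set I, i.e. for all distinct x, y ∈ I either R x y or R y x, then its weak canonical extension R̃ is connected: for all distinct ultrafilters u, v on I, R̃(u,v) or R̃(v,u) holds. -/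
/-! Intersecting the witnesses of failure of both `R̃(u,v)` and `R̃(v,u)` gives `A ∈ u` and
`B ∈ v` with no `R`-edge between them in either direction. Since `u ≠ v`, `A` and `B` contain
distinct points `a ∈ A`, `b ∈ B`, and connectedness of `R` relates them. -/

namespace Ultrafilter

variable {α : Type*} {u v : Ultrafilter α}

theorem exists_mem_compl_mem_of_ne (h : u ≠ v) : ∃ S ∈ u, Sᶜ ∈ v := by
  by_contra! hsep
  exact h (eq_of_le fun S hS => compl_notMem_iff.1 (hsep S hS)).symm

theorem exists_ne_of_mem_of_ne (h : u ≠ v) {A B : Set α} (hA : A ∈ u) (hB : B ∈ v) :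
    ∃ a ∈ A, ∃ b ∈ B, a ≠ b := by
  obtain ⟨S, hSu, hSv⟩ := exists_mem_compl_mem_of_ne h
  obtain ⟨a, haA, haS⟩ := nonempty_of_mem (Filter.inter_mem hA hSu)
  obtain ⟨b, hbB, hbS⟩ := nonempty_of_mem (Filter.inter_mem hB hSv)
  exact ⟨a, haA, b, hbB, fun hab => hbS (hab ▸ haS)⟩

end Ultrafilter

theorem stmt_6 {I : Type*} (R : I → I → Prop)
    (hR : ∀ x y : I, x ≠ y → R x y ∨ R y x) (u v : Ultrafilter I) (huv : u ≠ v) :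
    (∀ A ∈ u, ∀ B ∈ v, ∃ a ∈ A, ∃ b ∈ B, R a b) ∨
    (∀ A ∈ v, ∀ B ∈ u, ∃ a ∈ A, ∃ b ∈ B, R a b) := by
  by_contra! h
  obtain ⟨⟨A, hA, B, hB, hAB⟩, ⟨B', hB', A', hA', hBA⟩⟩ := h
  obtain ⟨a, ⟨haA, haA'⟩, b, ⟨hbB, hbB'⟩, hab⟩ :=
    Ultrafilter.exists_ne_of_mem_of_ne huv (Filter.inter_mem hA hA') (Filter.inter_mem hB hB')
  rcases hR a b hab with hr | hr
  · exact hAB a haA b hbB hr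
  · exact hBA b hbB' a haA' hr
end

section
/- If R is a total preorder on a set I (reflexive, transitive, and connected), then its weak canonical extension R̃ is a total preorder on the ultrafilters on I. -/
/-!
Reflexivity lifts because `A ∩ B` is nonempty for `A, B ∈ u`. For transitivity, the set of
points lying `R`-below some point of `C` is either in the middle ultrafilter, and then
transitivity of `R` applies, or its complement is, which contradicts the second hypothesis.
For totality, if `R̃ u v` fails on witnesses `A ∈ u`, `B ∈ v`, then every point of `B` is
`R`-above every point of `A`, and meeting any `A' ∈ v`, `B' ∈ u` with `B`, `A` gives `R̃ v u`.
-/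

namespace Ultrafilter

variable {I : Type*}

def weakCanonicalExt (R : I → I → Prop) (u v : Ultrafilter I) : Prop :=
  ∀ A ∈ u, ∀ B ∈ v, ∃ a ∈ A, ∃ b ∈ B, R a b

variable {R : I → I → Prop}

theorem weakCanonicalExt_refl (hR : Reflexive R) : Reflexive (weakCanonicalExt R) := by
  intro u A hA B hB
  obtain ⟨a, haA, haB⟩ := u.nonempty_of_mem (Filter.inter_mem hA hB)
  exact ⟨a, haA, a, haB, hR a⟩

theorem weakCanonicalExt_trans (hR : Transitive R) : Transitive (weakCanonicalExt R) := by
  intro u v w huv hvw A hA C hC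
  by_cases hbelow : {b | ∃ c ∈ C, R b c} ∈ v
  · obtain ⟨a, haA, b, ⟨c, hcC, hbc⟩, hab⟩ := huv A hA _ hbelow
    exact ⟨a, haA, c, hcC, hR hab hbc⟩
  · obtain ⟨b, hb, c, hcC, hbc⟩ := hvw _ (compl_mem_iff_notMem.2 hbelow) C hC
    exact absurd ⟨c, hcC, hbc⟩ hb

theorem weakCanonicalExt_total (hR : ∀ x y, R x y ∨ R y x) (u v : Ultrafilter I) :
    weakCanonicalExt R u v ∨ weakCanonicalExt R v u := by
  refine or_iff_not_imp_left.2 fun huv A' hA' B' hB' => ?_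
  obtain ⟨A, hA, B, hB, hAB⟩ : ∃ A ∈ u, ∃ B ∈ v, ∀ a ∈ A, ∀ b ∈ B, ¬R a b := by
    simpa [weakCanonicalExt] using huv
  obtain ⟨b, hbA', hbB⟩ := v.nonempty_of_mem (Filter.inter_mem hA' hB)
  obtain ⟨a, haB', haA⟩ := u.nonempty_of_mem (Filter.inter_mem hB' hA)
  exact ⟨b, hbA', a, haB', (hR a b).resolve_left (hAB a haA b hbB)⟩

end Ultrafilter

open Ultrafilter in
theorem stmt_7 {I : Type*} (R : I → I → Prop)
    (hrefl : Reflexive R) (htrans : Transitive R)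
    (hconn : ∀ x y : I, x ≠ y → R x y ∨ R y x) :
    Reflexive (fun u v : Ultrafilter I => ∀ A ∈ u, ∀ B ∈ v, ∃ a ∈ A, ∃ b ∈ B, R a b) ∧
    Transitive (fun u v : Ultrafilter I => ∀ A ∈ u, ∀ B ∈ v, ∃ a ∈ A, ∃ b ∈ B, R a b) ∧
    (∀ u v : Ultrafilter I, u ≠ v →
      (∀ A ∈ u, ∀ B ∈ v, ∃ a ∈ A, ∃ b ∈ B, R a b) ∨
      (∀ A ∈ v, ∀ B ∈ u, ∃ a ∈ A, ∃ b ∈ B, R a b)) := by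
  have htotal : ∀ x y, R x y ∨ R y x := fun x y => by
    rcases eq_or_ne x y with rfl | hne
    · exact Or.inl (hrefl x)
    · exact hconn x y hne
  exact ⟨weakCanonicalExt_refl hrefl, weakCanonicalExt_trans htrans,
    fun u v _ => weakCanonicalExt_total htotal u v⟩
end

section
/- Let R be a symmetric and transitive binary relation on a set I whose strong canonical extension R^s is reflexive on all ultrafilters. Then R^s is symmetric: for all ultrafilters u, v on I, R^s(u,v) implies R^s(v,u). -/
theorem Filter.rel_of_setOf_rel_mem {I : Type*} {R : I → I → Prop} (hsymm : Symmetric R)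
    (htrans : Transitive R) {f : Filter I} [f.NeBot] {a c : I}
    (ha : {b | R a b} ∈ f) (hc : {b | R c b} ∈ f) : R a c := by
  obtain ⟨b, hab, hcb⟩ := Filter.nonempty_of_mem (Filter.inter_mem ha hc)
  exact htrans hab (hsymm hcb)

theorem stmt_12 {I : Type*} (R : I → I → Prop) (hsymm : Symmetric R) (htrans : Transitive R)
    (hrefl : ∀ u : Ultrafilter I, {a : I | {b : I | R a b} ∈ u} ∈ u)
    (u v : Ultrafilter I) (h : {a : I | {b : I | R a b} ∈ v} ∈ u) :
    {a : I | {b : I | R a b} ∈ u} ∈ v := by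
  filter_upwards [hrefl v] with a ha
  filter_upwards [h] with c hc
  exact Filter.rel_of_setOf_rel_mem hsymm htrans ha hc
end

section
/- Let R be an equivalence relation on a set I. Then the strong canonical extension R^s is an equivalence relation on the ultrafilters on I if and only if R^s is reflexive (i.e. R^s(u,u) holds for every ultrafilter u on I). -/
/-!
Write `T v = {a | R[a] ∈ v}`, so that `R^s u v` says `T v ∈ u`. For an equivalence `R`, `T v` is a
union of `R`-classes, and every `R`-saturated member of `v` contains `T v`, since a point of `T v`
is related to some point of that member. Transitivity of `R^s` follows directly. For symmetry, if
`T u ∉ v` then its saturated complement lies in `v`, so `T v` misses `T u`; this is impossible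
when both lie in `u`, which is where reflexivity `T u ∈ u` enters.
-/

section

variable {I : Type*} (R : I → I → Prop)

def largeFiberSet (v : Ultrafilter I) : Set I := {a | {b | R a b} ∈ v}

def IsRSaturated (B : Set I) : Prop := ∀ a b, R a b → a ∈ B → b ∈ B

variable {R}

theorem isRSaturated_compl (hR : Std.Symm R) {B : Set I} (hB : IsRSaturated R B) :
    IsRSaturated R Bᶜ :=
  fun a b hab ha hb => ha (hB b a (hR.symm _ _ hab) hb)

theorem isRSaturated_largeFiberSet (hR : Equivalence R) (v : Ultrafilter I) :
    IsRSaturated R (largeFiberSet R v) := fun _ _ hab ha =>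
  v.mem_of_superset ha fun _ hac => hR.trans (hR.symm hab) hac

theorem largeFiberSet_subset (hR : Std.Symm R) {v : Ultrafilter I} {B : Set I}
    (hsat : IsRSaturated R B) (hB : B ∈ v) : largeFiberSet R v ⊆ B := fun a ha => by
  obtain ⟨b, hab, hb⟩ := Ultrafilter.nonempty_of_mem (v.inter_mem ha hB)
  exact hsat b a (hR.symm _ _ hab) hb

theorem largeFiberSet_mem_symm (hR : Equivalence R) {u v : Ultrafilter I}
    (hu : largeFiberSet R u ∈ u) (huv : largeFiberSet R v ∈ u) : largeFiberSet R u ∈ v := by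
  by_contra hvu
  have hsub : largeFiberSet R v ⊆ (largeFiberSet R u)ᶜ :=
    largeFiberSet_subset hR.stdSymm
      (isRSaturated_compl hR.stdSymm (isRSaturated_largeFiberSet hR u))
      (Ultrafilter.compl_mem_iff_notMem.mpr hvu)
  obtain ⟨a, hav, hau⟩ := Ultrafilter.nonempty_of_mem (u.inter_mem huv hu)
  exact hsub hav hau

theorem largeFiberSet_mem_trans (hR : Equivalence R) {u v w : Ultrafilter I}
    (huv : largeFiberSet R v ∈ u) (hvw : largeFiberSet R w ∈ v) : largeFiberSet R w ∈ u :=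
  u.mem_of_superset huv
    (largeFiberSet_subset hR.stdSymm (isRSaturated_largeFiberSet hR w) hvw)

end

theorem stmt_13 {I : Type*} (R : I → I → Prop) (hR : Equivalence R) :
    Equivalence (fun u v : Ultrafilter I => {a : I | {b : I | R a b} ∈ v} ∈ u) ↔
    (∀ u : Ultrafilter I, {a : I | {b : I | R a b} ∈ u} ∈ u) :=
  ⟨fun h => h.refl, fun hrefl =>
    ⟨hrefl, largeFiberSet_mem_symm hR (hrefl _), largeFiberSet_mem_trans hR⟩⟩
end

section
/- Let R be a total preorder on a set I (reflexive, transitive, connected) whose strong canonical extension R^s is reflexive on all ultrafilters. Then R^s is a total preorder on the ultrafilters on I: reflexive, transitive, and for all distinct ultrafilters u, v, R^s(u,v) or R^s(v,u). -/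
/-!
Transitivity of `R^s` needs only transitivity of `R`: a witness `b` is found in the intersection
of two `v`-large sets. For totality, suppose neither `R^s(u,v)` nor `R^s(v,u)`. Totality of `R`
turns the second failure into "`v`-almost every `b` lies `R`-above `u`-almost every `a`", while the
first says that `u`-almost every `a` has few `R`-successors in `v`. Transitivity of `R` passes the
latter up to `b`, so `v`-almost every `b` has few `R`-successors in `v`, contradicting `R^s(v,v)`.
-/

namespace Ultrafilter

variable {I : Type*} {R : I → I → Prop}

/-- The strong canonical extension `R^s` of `R` to ultrafilters. -/
def StrongExt (R : I → I → Prop) (u v : Ultrafilter I) : Prop :=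
  ∀ᶠ a in u, ∀ᶠ b in v, R a b

theorem strongExt_trans (htrans : Transitive R) : Transitive (StrongExt R) := by
  intro u v w huv hvw
  filter_upwards [huv] with a ha
  obtain ⟨b, hab, hb⟩ := (ha.and hvw).exists
  exact hb.mono fun c => htrans hab

theorem eventually_eventually_rel_of_not_strongExt (htot : ∀ x y, R x y ∨ R y x)
    {u v : Ultrafilter I} (h : ¬ StrongExt R v u) : ∀ᶠ b in v, ∀ᶠ a in u, R a b := by
  filter_upwards [eventually_not.2 h] with b hb
  filter_upwards [eventually_not.2 hb] with a ha
  exact (htot a b).resolve_right ha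

theorem strongExt_total (htrans : Transitive R) (htot : ∀ x y, R x y ∨ R y x)
    (hsrefl : ∀ u, StrongExt R u u) (u v : Ultrafilter I) :
    StrongExt R u v ∨ StrongExt R v u := by
  by_contra! ⟨huv, hvu⟩
  have hfew : ∀ᶠ a in u, ¬ ∀ᶠ b in v, R a b := eventually_not.2 huv
  have hbelow := eventually_eventually_rel_of_not_strongExt htot hvu
  have hv : ∀ᶠ b in v, ¬ ∀ᶠ c in v, R b c := by
    filter_upwards [hbelow] with b hb hbv
    obtain ⟨a, hab, ha⟩ := (hb.and hfew).exists
    exact ha (hbv.mono fun c => htrans hab)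
  obtain ⟨b, hb, hb'⟩ := (hv.and (hsrefl v)).exists
  exact hb hb'

end Ultrafilter

open Ultrafilter in
theorem stmt_14 {I : Type*} (R : I → I → Prop)
    (hrefl : Reflexive R) (htrans : Transitive R)
    (hconn : ∀ x y : I, x ≠ y → R x y ∨ R y x)
    (hsrefl : ∀ u : Ultrafilter I, {a : I | {b : I | R a b} ∈ u} ∈ u) :
    Reflexive (fun u v : Ultrafilter I => {a : I | {b : I | R a b} ∈ v} ∈ u) ∧
    Transitive (fun u v : Ultrafilter I => {a : I | {b : I | R a b} ∈ v} ∈ u) ∧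
    (∀ u v : Ultrafilter I, u ≠ v →
      {a : I | {b : I | R a b} ∈ v} ∈ u ∨ {a : I | {b : I | R a b} ∈ u} ∈ v) := by
  have htot : ∀ x y, R x y ∨ R y x := fun x y =>
    (eq_or_ne x y).elim (fun h => h ▸ Or.inl (hrefl x)) (hconn x y)
  exact ⟨hsrefl, strongExt_trans htrans, fun u v _ => strongExt_total htrans htot hsrefl u v⟩
end
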